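/- arXiv:1004.1850 — 3 statements merged into one kernel-verified Lean document; each statement's English description precedes it below -/
import Mathlib

section
/- Let X₁, X₂, … be i.i.d. random variables taking the values +1 and −1 each with probability 1/2, let S₀ = 0 and S_n = X₁ + ⋯ + X_n be the simplest symmetric random walk, and let τ = inf{i > 0 : S_i = 0}. For a positive integer α let L_α be the number of indices t ∈ {0, 1, …, τ − 1} with S_t = α − 1 and S_{t+1} = α. Then E L_α = 1/2 for every positive integer α. -/
open MeasureTheory ProbabilityTheory Filter

noncomputable section

variable {Ω : Type*} [MeasurableSpace Ω]

/-- Partial sums of the steps: `pS X n = X 0 + ⋯ + X (n-1)`, i.e. the walk `S_n`, where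
`X i` stands for the step `X_{i+1}` of the paper. -/
def pS (X : ℕ → Ω → ℝ) : ℕ → Ω → ℝ
  | 0 => fun _ => 0
  | (t + 1) => fun ω => pS X t ω + X t ω

/-- The first return time to `0`: `τ = inf {i > 0 : S_i = 0}`. -/
def tauRet (X : ℕ → Ω → ℝ) (ω : Ω) : ℕ∞ :=
  sInf {n : ℕ∞ | ∃ i : ℕ, n = (i : ℕ∞) ∧ 0 < i ∧ pS X i ω = 0}

/-- The number of upcrossings of the level `α` before `τ`: the number of
`t ∈ {0, 1, …, τ - 1}` with `S_t = α - 1` and `S_{t+1} = α`. -/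
def nUp (X : ℕ → Ω → ℝ) (α : ℝ) (ω : Ω) : ℕ :=
  Set.ncard {t : ℕ | (t : ℕ∞) < tauRet X ω ∧ pS X t ω = α - 1 ∧ pS X (t + 1) ω = α}

open scoped Topology ENNReal NNReal

/-!
The walk returns to `0` almost surely: `S_{n+1}` is a martingale with increments `±1`, so almost
surely it is bounded above iff it is bounded below iff it converges, and it cannot converge; a
walk that never returns keeps a constant sign and so would be bounded on one side.

For a walk that returns, the edge `{a, a + 1}` (`a ≥ 0`) is crossed upwards before `τ` exactly as
often as downwards. On the other hand the event `{t < τ, S_t = a}` is independent of `X_{t+1}`,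
so a step `a → a + 1` and a step `a → a - 1` at time `t` before `τ` are equally likely. Taking
expectations, the expected numbers of crossings `a → a + 1` and `a + 1 → a + 2` agree, and for
`a = 0` only `t = 0` contributes, with probability `P(X₁ = 1) = 1/2`.
-/

section IntegerPath

variable {f : ℕ → ℤ}

theorem card_up_eq_card_down_add (hf0 : f 0 = 0)
    (hstep : ∀ t, f (t + 1) = f t + 1 ∨ f (t + 1) = f t - 1) {a : ℤ} (ha : 0 ≤ a) (m : ℕ) :
    ((Finset.range m).filter fun t => f t = a ∧ f (t + 1) = a + 1).card =
      ((Finset.range m).filter fun t => f t = a + 1 ∧ f (t + 1) = a).card +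
        if a < f m then 1 else 0 := by
  induction m with
  | zero => simp [hf0, ha]
  | succ m ih =>
    rw [Finset.range_add_one, Finset.filter_insert, Finset.filter_insert]
    have hm (p : ℕ → Prop) [DecidablePred p] : m ∉ (Finset.range m).filter p := by simp
    rcases hstep m with h | h <;> rw [h] <;> split_ifs at ih ⊢ <;>
      (try rw [Finset.card_insert_of_notMem (hm _)]) <;> omega

theorem card_up_eq_card_down (hf0 : f 0 = 0)
    (hstep : ∀ t, f (t + 1) = f t + 1 ∨ f (t + 1) = f t - 1)
    {a : ℤ} (ha : 0 ≤ a) {N : ℕ} (hN : f N = 0) :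
    ((Finset.range N).filter fun t => f t = a ∧ f (t + 1) = a + 1).card =
      ((Finset.range N).filter fun t => f t = a + 1 ∧ f (t + 1) = a).card := by
  simpa [hN, ha.not_gt] using card_up_eq_card_down_add hf0 hstep ha N

theorem pos_or_neg_of_ne_zero (hf0 : f 0 = 0)
    (hstep : ∀ t, f (t + 1) = f t + 1 ∨ f (t + 1) = f t - 1) (hne : ∀ n, f (n + 1) ≠ 0) :
    (∀ n, 0 < f (n + 1)) ∨ ∀ n, f (n + 1) < 0 := by
  rcases hstep 0 with h0 | h0
  · left
    intro n
    induction n with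
    | zero => omega
    | succ n ih => have := hne (n + 1); rcases hstep (n + 1) with h | h <;> omega
  · right
    intro n
    induction n with
    | zero => omega
    | succ n ih => have := hne (n + 1); rcases hstep (n + 1) with h | h <;> omega

end IntegerPath

theorem not_tendsto_of_abs_sub_eq_one {u : ℕ → ℝ} (hu : ∀ n, |u (n + 1) - u n| = 1) (c : ℝ) :
    ¬Tendsto u atTop (𝓝 c) := by
  intro hc
  have hdiff : Tendsto (fun n => |u (n + 1) - u n|) atTop (𝓝 0) := by
    simpa using ((hc.comp (tendsto_add_atTop_nat 1)).sub hc).abs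
  simp only [hu] at hdiff
  exact one_ne_zero (tendsto_nhds_unique tendsto_const_nhds hdiff)

theorem Set.cast_ncard_eq_toReal_encard {α : Type*} (s : Set α) :
    (s.ncard : ℝ) = (s.encard : ℝ≥0∞).toReal := by
  rcases s.finite_or_infinite with hs | hs
  · rw [← hs.cast_ncard_eq]
    simp
  · simp [hs.ncard, hs.encard_eq]

theorem encard_setOf_mem_eq_tsum {α : Type*} (E : ℕ → Set α) (ω : α) :
    ({t | ω ∈ E t}.encard : ℝ≥0∞) = ∑' t, (E t).indicator 1 ω := by
  rw [← ENNReal.tsum_set_one, tsum_subtype {t | ω ∈ E t} fun _ => 1]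
  rfl

section Walk

variable {Ω₀ : Type*} {X : ℕ → Ω₀ → ℝ} {ω : Ω₀}

@[simp]
theorem pS_zero (X : ℕ → Ω₀ → ℝ) (ω : Ω₀) : pS X 0 ω = 0 := rfl

theorem pS_succ (X : ℕ → Ω₀ → ℝ) (n : ℕ) (ω : Ω₀) : pS X (n + 1) ω = pS X n ω + X n ω := rfl

theorem pS_eq_sum (X : ℕ → Ω₀ → ℝ) (n : ℕ) (ω : Ω₀) :
    pS X n ω = ∑ i ∈ Finset.range n, X i ω := by
  induction n with
  | zero => rfl
  | succ n ih => rw [pS_succ, ih, Finset.sum_range_succ]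

theorem lt_tauRet_iff {t : ℕ} : (t : ℕ∞) < tauRet X ω ↔ ∀ i ≤ t, 0 < i → pS X i ω ≠ 0 := by
  rw [← ENat.add_one_le_iff (ENat.natCast_ne_top t), tauRet, le_sInf_iff]
  simp only [Set.mem_ofPred_eq, forall_exists_index, and_imp]
  constructor
  · intro h i hi hi0 hS
    have := h i i rfl hi0 hS
    norm_cast at this
    omega
  · rintro h _ i rfl hi0 hS
    norm_cast
    by_contra hti
    exact h i (by omega) hi0 hS

theorem zero_lt_tauRet : 0 < tauRet X ω := by
  simpa using (lt_tauRet_iff (X := X) (ω := ω) (t := 0)).mpr (by omega)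

theorem tauRet_eq_find (h : ∃ n, 0 < n ∧ pS X n ω = 0) : tauRet X ω = Nat.find h :=
  le_antisymm (sInf_le ⟨_, rfl, Nat.find_spec h⟩)
    (le_sInf fun _ ⟨_, hn, hi⟩ => hn ▸ Nat.cast_le.mpr (Nat.find_le hi))

theorem exists_int_path (hX : ∀ i, X i ω = 1 ∨ X i ω = -1) :
    ∃ F : ℕ → ℤ, F 0 = 0 ∧ (∀ t, F (t + 1) = F t + 1 ∨ F (t + 1) = F t - 1) ∧
      ∀ n, pS X n ω = F n := by
  refine ⟨fun n => ∑ i ∈ Finset.range n, if X i ω = 1 then 1 else -1, by simp,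
    fun t => ?_, fun n => ?_⟩
  · simp only [Finset.sum_range_succ]
    split_ifs <;> omega
  · induction n with
    | zero => simp
    | succ n ih =>
      rcases hX n with h | h <;> simp [pS_succ, ih, Finset.sum_range_succ, h]

theorem measurableSet_lt_tauRet_pS_eq [m : MeasurableSpace Ω₀] {t : ℕ}
    (hX : ∀ i < t, Measurable (X i)) (a : ℝ) :
    MeasurableSet {ω | (t : ℕ∞) < tauRet X ω ∧ pS X t ω = a} := by
  have hS : ∀ n ≤ t, Measurable (pS X n) := by
    intro n hn
    induction n with
    | zero => exact measurable_const
    | succ n ih => exact (ih (by omega)).add (hX n (by omega))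
  simp_rw [lt_tauRet_iff]
  refine Measurable.setOf (.and (.forall fun i => ?_) ((hS t le_rfl).eq_const a))
  by_cases hi : i ≤ t
  · exact .imp measurable_const (.imp measurable_const ((hS i hi).eq_const 0).not)
  · simp [hi]

def crossing (X : ℕ → Ω₀ → ℝ) (a b : ℝ) (t : ℕ) : Set Ω₀ :=
  {ω | (t : ℕ∞) < tauRet X ω ∧ pS X t ω = a ∧ pS X (t + 1) ω = b}

theorem crossing_eq_inter (X : ℕ → Ω₀ → ℝ) (a b : ℝ) (t : ℕ) :
    crossing X a b t = {ω | (t : ℕ∞) < tauRet X ω ∧ pS X t ω = a} ∩ X t ⁻¹' {b - a} := by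
  ext ω
  simp only [crossing, pS_succ, Set.mem_inter_iff, Set.mem_ofPred_eq, Set.mem_preimage,
    Set.mem_singleton_iff]
  constructor
  · rintro ⟨hτ, ha, hb⟩
    exact ⟨⟨hτ, ha⟩, by linarith⟩
  · rintro ⟨⟨hτ, ha⟩, hb⟩
    exact ⟨hτ, ha, by linarith⟩

theorem crossing_zero_one_of_pos {t : ℕ} (ht : 0 < t) : crossing X 0 1 t = ∅ := by
  ext ω
  simp only [crossing, lt_tauRet_iff, Set.mem_ofPred_eq, Set.mem_empty_iff_false, iff_false]
  exact fun ⟨hτ, hS, _⟩ => hτ t le_rfl ht hS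

theorem crossing_zero_one_zero : crossing X 0 1 0 = X 0 ⁻¹' {1} := by
  ext ω
  simp [crossing, zero_lt_tauRet, pS_succ]

theorem nUp_add_one (a : ℝ) : nUp X (a + 1) ω = {t | ω ∈ crossing X a (a + 1) t}.ncard := by
  simp [nUp, crossing]

theorem encard_crossing_up_eq_down (hX : ∀ i, X i ω = 1 ∨ X i ω = -1)
    (hret : ∃ n, 0 < n ∧ pS X n ω = 0) (a : ℕ) :
    {t | ω ∈ crossing X a (a + 1) t}.encard = {t | ω ∈ crossing X (a + 1) a t}.encard := by
  obtain ⟨F, hF0, hstep, hF⟩ := exists_int_path hX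
  have hcross (b c : ℤ) : {t | ω ∈ crossing X b c t} =
      ((Finset.range (Nat.find hret)).filter fun t => F t = b ∧ F (t + 1) = c) := by
    ext t
    simp [crossing, tauRet_eq_find hret, hF]
  have hFN : F (Nat.find hret) = 0 := by
    exact_mod_cast (hF _).symm.trans (Nat.find_spec hret).2
  have hcast : ((a : ℤ) : ℝ) = a ∧ ((a + 1 : ℤ) : ℝ) = a + 1 := by push_cast; simp
  rw [← hcast.2, ← hcast.1, hcross, hcross, Set.encard_coe_eq_coe_finsetCard,
    Set.encard_coe_eq_coe_finsetCard,
    card_up_eq_card_down hF0 hstep (Int.natCast_nonneg a) hFN]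

end Walk

section Counting

variable {μ : Measure Ω} {E : ℕ → Set Ω}

theorem measurable_encard_setOf_mem (hE : ∀ t, MeasurableSet (E t)) :
    Measurable fun ω => ({t | ω ∈ E t}.encard : ℝ≥0∞) := by
  simp_rw [encard_setOf_mem_eq_tsum]
  exact .tsum fun t => measurable_const.indicator (hE t)

theorem lintegral_encard_setOf_mem (hE : ∀ t, MeasurableSet (E t)) :
    ∫⁻ ω, ({t | ω ∈ E t}.encard : ℝ≥0∞) ∂μ = ∑' t, μ (E t) := by
  simp_rw [encard_setOf_mem_eq_tsum]
  rw [lintegral_tsum (f := fun t => (E t).indicator 1) fun t =>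
    (measurable_const.indicator (hE t)).aemeasurable]
  simp_rw [lintegral_indicator_one (hE _)]

theorem integral_ncard_setOf_mem (hE : ∀ t, MeasurableSet (E t)) (hfin : ∑' t, μ (E t) ≠ ∞) :
    ∫ ω, ({t | ω ∈ E t}.ncard : ℝ) ∂μ = (∑' t, μ (E t)).toReal := by
  have hm := measurable_encard_setOf_mem hE
  simp_rw [Set.cast_ncard_eq_toReal_encard]
  rw [integral_toReal hm.aemeasurable
    (ae_lt_top hm (by rwa [lintegral_encard_setOf_mem hE])), lintegral_encard_setOf_mem hE]

end Counting

section Probability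

variable {μ : Measure Ω}

theorem ae_eq_one_or_neg_one [IsProbabilityMeasure μ] {Y : Ω → ℝ} (hY : Measurable Y)
    (h1 : μ {ω | Y ω = 1} = 1 / 2) (h2 : μ {ω | Y ω = -1} = 1 / 2) :
    ∀ᵐ ω ∂μ, Y ω = 1 ∨ Y ω = -1 := by
  have hm : MeasurableSet {ω | Y ω = 1 ∨ Y ω = -1} :=
    (hY.eq_const 1).or (hY.eq_const (-1)) |>.setOf
  rw [ae_iff, ← Set.compl_ofPred, prob_compl_eq_zero_iff hm, Set.ofPred_or,
    measure_union _ (measurableSet_eq_fun hY measurable_const), h1, h2, ENNReal.add_halves]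
  exact Set.disjoint_left.mpr fun ω (ha : Y ω = 1) hb => by
    norm_num [Set.mem_ofPred_eq, ha] at hb

theorem integral_eq_zero_of_ae_eq_one_or_neg_one [IsFiniteMeasure μ] {Y : Ω → ℝ}
    (hY : Measurable Y) (hpm : ∀ᵐ ω ∂μ, Y ω = 1 ∨ Y ω = -1)
    (hsymm : μ {ω | Y ω = 1} = μ {ω | Y ω = -1}) :
    ∫ ω, Y ω ∂μ = 0 := by
  have hs1 : MeasurableSet {ω | Y ω = 1} := hY (measurableSet_singleton _)
  have hs2 : MeasurableSet {ω | Y ω = -1} := hY (measurableSet_singleton _)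
  have hY' : Y =ᵐ[μ] fun ω =>
      {ω | Y ω = 1}.indicator 1 ω - {ω | Y ω = -1}.indicator 1 ω := by
    filter_upwards [hpm] with ω hω
    rcases hω with h | h <;> norm_num [Set.indicator, h]
  rw [integral_congr_ae hY', integral_sub ((integrable_const 1).indicator hs1)
    ((integrable_const 1).indicator hs2), integral_indicator_one hs1, integral_indicator_one hs2,
    measureReal_def, measureReal_def, hsymm, sub_self]

theorem ProbabilityTheory.iIndepFun.martingale_sum {ξ : ℕ → Ω → ℝ}
    (hsm : ∀ i, StronglyMeasurable (ξ i)) (hindep : iIndepFun ξ μ)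
    (hint : ∀ i, Integrable (ξ i) μ) (hmean : ∀ i, μ[ξ i] = 0) :
    Martingale (fun n ω => ∑ i ∈ Finset.range (n + 1), ξ i ω) (Filtration.natural ξ hsm) μ := by
  have := hindep.isProbabilityMeasure
  refine martingale_of_condExp_sub_eq_zero_nat (fun n => ?_)
    (fun n => integrable_finsetSum _ fun i _ => hint i) (fun n => ?_)
  · refine Finset.stronglyMeasurable_fun_sum _ fun i hi => ?_
    exact (Filtration.stronglyAdapted_natural hsm i).mono
      ((Filtration.natural ξ hsm).mono (Nat.lt_succ_iff.mp (Finset.mem_range.mp hi)))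
  · have hinc : (fun ω => ∑ i ∈ Finset.range (n + 1 + 1), ξ i ω) -
        (fun ω => ∑ i ∈ Finset.range (n + 1), ξ i ω) = ξ (n + 1) := by
      ext ω
      simp [Finset.sum_range_succ _ (n + 1)]
    rw [hinc]
    filter_upwards [hindep.condExp_natural_ae_eq_of_lt hsm n.lt_succ_self] with ω hω
    rw [hω, hmean]
    rfl

theorem ae_exists_pS_eq_zero {X : ℕ → Ω → ℝ}
    (hmeas : ∀ i, Measurable (X i)) (hindep : iIndepFun X μ)
    (hpm : ∀ᵐ ω ∂μ, ∀ i, X i ω = 1 ∨ X i ω = -1) (hmean : ∀ i, μ[X i] = 0) :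
    ∀ᵐ ω ∂μ, ∃ n, 0 < n ∧ pS X n ω = 0 := by
  have := hindep.isProbabilityMeasure
  have hint (i : ℕ) : Integrable (X i) μ := by
    refine .of_bound (hmeas i).aestronglyMeasurable 1 ?_
    filter_upwards [hpm] with ω hω
    rcases hω i with h | h <;> simp [h]
  have hM := hindep.martingale_sum (fun i => (hmeas i).stronglyMeasurable) hint hmean
  simp_rw [← pS_eq_sum] at hM
  have hinc : ∀ᵐ ω ∂μ, ∀ i, |pS X (i + 1 + 1) ω - pS X (i + 1) ω| ≤ ((1 : ℝ≥0) : ℝ) := by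
    filter_upwards [hpm] with ω hω i
    rcases hω (i + 1) with h | h <;> simp [pS_succ X (i + 1), h]
  filter_upwards [hpm, hM.submartingale.bddAbove_iff_exists_tendsto hinc,
    hM.bddAbove_range_iff_bddBelow_range hinc] with ω hω hconv hbdd
  by_contra! hne
  obtain ⟨F, hF0, hstep, hF⟩ := exists_int_path hω
  have habove : BddAbove (Set.range fun n => pS X (n + 1) ω) := by
    have hF_ne (n : ℕ) : F (n + 1) ≠ 0 := fun h => hne (n + 1) n.succ_pos (by simp [hF, h])
    rcases pos_or_neg_of_ne_zero hF0 hstep hF_ne with hpos | hneg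
    · refine hbdd.mpr ⟨1, ?_⟩
      rintro _ ⟨n, rfl⟩
      have : 1 ≤ F (n + 1) := hpos n
      simp only [hF]
      exact_mod_cast this
    · refine ⟨-1, ?_⟩
      rintro _ ⟨n, rfl⟩
      have : F (n + 1) ≤ -1 := by have := hneg n; omega
      simp only [hF]
      exact_mod_cast this
  obtain ⟨c, hc⟩ := hconv.mp habove
  refine not_tendsto_of_abs_sub_eq_one (fun n => ?_) c hc
  rcases hω (n + 1) with h | h <;> simp [pS_succ X (n + 1), h]

end Probability

section Crossings

variable {μ : Measure Ω} {X : ℕ → Ω → ℝ}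

theorem tsum_measure_crossing_zero_one : ∑' t, μ (crossing X 0 1 t) = μ (X 0 ⁻¹' {1}) := by
  rw [tsum_eq_single 0 fun t ht => by
    rw [crossing_zero_one_of_pos (Nat.pos_of_ne_zero ht), measure_empty], crossing_zero_one_zero]

theorem measurableSet_crossing (hmeas : ∀ i, Measurable (X i)) (a b : ℝ) (t : ℕ) :
    MeasurableSet (crossing X a b t) := by
  rw [crossing_eq_inter]
  exact (measurableSet_lt_tauRet_pS_eq (fun i _ => hmeas i) a).inter
    (hmeas t (measurableSet_singleton _))

theorem measure_crossing (hmeas : ∀ i, Measurable (X i)) (hindep : iIndepFun X μ)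
    (a b : ℝ) (t : ℕ) :
    μ (crossing X a b t) =
      μ {ω | (t : ℕ∞) < tauRet X ω ∧ pS X t ω = a} * μ (X t ⁻¹' {b - a}) := by
  have hpast : Indep (⨆ i ∈ Set.Iio t, MeasurableSpace.comap (X i) inferInstance)
      (MeasurableSpace.comap (X t) inferInstance) μ := by
    simpa using indep_iSup_of_disjoint (fun i => (hmeas i).comap_le) hindep
      (S := Set.Iio t) (T := {t}) (by simp)
  rw [crossing_eq_inter]
  refine (hpast.indepSet_of_measurableSet ?_ ⟨{b - a}, measurableSet_singleton _, rfl⟩)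
    |>.measure_inter_eq_mul
  exact measurableSet_lt_tauRet_pS_eq (m := ⨆ i ∈ Set.Iio t, _)
    (fun i hi => (comap_measurable (X i)).mono (le_iSup₂ (f := fun j (_ : j ∈ Set.Iio t) =>
      MeasurableSpace.comap (X j) inferInstance) i hi) le_rfl) a

theorem measure_crossing_up_eq_down (hmeas : ∀ i, Measurable (X i)) (hindep : iIndepFun X μ)
    {t : ℕ} (hsymm : μ (X t ⁻¹' {1}) = μ (X t ⁻¹' {-1})) (a : ℝ) :
    μ (crossing X a (a + 1) t) = μ (crossing X a (a - 1) t) := by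
  rw [measure_crossing hmeas hindep, measure_crossing hmeas hindep, add_sub_cancel_left,
    sub_sub_cancel_left, hsymm]

theorem tsum_measure_crossing_succ (hmeas : ∀ i, Measurable (X i))
    (hindep : iIndepFun X μ) (hsymm : ∀ t, μ (X t ⁻¹' {1}) = μ (X t ⁻¹' {-1}))
    (hpm : ∀ᵐ ω ∂μ, ∀ i, X i ω = 1 ∨ X i ω = -1) (hret : ∀ᵐ ω ∂μ, ∃ n, 0 < n ∧ pS X n ω = 0)
    (k : ℕ) :
    ∑' t, μ (crossing X (k + 1) (k + 1 + 1) t) = ∑' t, μ (crossing X k (k + 1) t) := by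
  calc ∑' t, μ (crossing X (k + 1) (k + 1 + 1) t)
      = ∑' t, μ (crossing X (k + 1) k t) := by
        simp_rw [measure_crossing_up_eq_down hmeas hindep (hsymm _), add_sub_cancel_right]
    _ = ∫⁻ ω, ({t | ω ∈ crossing X (k + 1) k t}.encard : ℝ≥0∞) ∂μ :=
        (lintegral_encard_setOf_mem (measurableSet_crossing hmeas _ _)).symm
    _ = ∫⁻ ω, ({t | ω ∈ crossing X k (k + 1) t}.encard : ℝ≥0∞) ∂μ := by
        refine lintegral_congr_ae ?_
        filter_upwards [hpm, hret] with ω hω hωret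
        rw [encard_crossing_up_eq_down hω hωret]
    _ = ∑' t, μ (crossing X k (k + 1) t) :=
        lintegral_encard_setOf_mem (measurableSet_crossing hmeas _ _)

end Crossings

/-- For the simplest symmetric random walk (i.i.d. `±1` steps with
probability `1/2` each), the expected number of upcrossings of any positive integer level
`α` before the first return to `0` equals `1/2`. -/
theorem stmt10 (μ : Measure Ω) [IsProbabilityMeasure μ]
    (X : ℕ → Ω → ℝ) (hmeas : ∀ i, Measurable (X i))
    (hindep : iIndepFun X μ)
    (hident : ∀ i, IdentDistrib (X i) (X 0) μ μ)
    (h1 : μ {ω | X 0 ω = 1} = 1 / 2) (h2 : μ {ω | X 0 ω = -1} = 1 / 2) :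
    ∀ α : ℕ, 1 ≤ α → ∫ ω, (nUp X (α : ℝ) ω : ℝ) ∂μ = 1 / 2 := by
  have hsymm (t : ℕ) : μ (X t ⁻¹' {1}) = μ (X t ⁻¹' {-1}) := by
    rw [(hident t).measure_mem_eq (measurableSet_singleton _),
      (hident t).measure_mem_eq (measurableSet_singleton _)]
    exact h1.trans h2.symm
  have hpm0 := ae_eq_one_or_neg_one (hmeas 0) h1 h2
  have hpm : ∀ᵐ ω ∂μ, ∀ i, X i ω = 1 ∨ X i ω = -1 :=
    ae_all_iff.mpr fun i => (hident i).symm.ae_snd (p := fun x => x = 1 ∨ x = -1)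
      ((measurableSet_singleton 1).union (measurableSet_singleton (-1))) hpm0
  have hret := ae_exists_pS_eq_zero hmeas hindep hpm fun i => by
    rw [(hident i).integral_eq]
    exact integral_eq_zero_of_ae_eq_one_or_neg_one (hmeas 0) hpm0 (hsymm 0)
  have hcount (k : ℕ) : ∑' t, μ (crossing X k (k + 1) t) = 1 / 2 := by
    induction k with
    | zero => rw [Nat.cast_zero, zero_add, tsum_measure_crossing_zero_one]; exact h1
    | succ k ih => rwa [Nat.cast_succ, tsum_measure_crossing_succ hmeas hindep hsymm hpm hret]
  intro α hα
  obtain ⟨k, rfl⟩ := Nat.exists_eq_add_of_le' hα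
  simp_rw [Nat.cast_succ, nUp_add_one]
  rw [integral_ncard_setOf_mem (measurableSet_crossing hmeas _ _) (by simp [hcount]),
    hcount]
  norm_num

end
end

section
/- Let X₁, X₂, … be i.i.d. random variables taking each of the values −2, −1, 1, 2 with probability 1/4, and let S_t be the associated random walk. Then the expected number of crossings of level 1 satisfies E L_1 = 1/2. -/
open MeasureTheory ProbabilityTheory Filter

noncomputable section

variable {Ω : Type*} [MeasurableSpace Ω]

/-- Conditional expectation of `f` given the event `A`. -/
def cexp (μ : Measure Ω) (A : Set Ω) (f : Ω → ℝ) : ℝ :=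
  (∫ ω in A, f ω ∂μ) / (μ A).toReal

/-- The stopping time `τ`: the first time `t > 1` with `S_t ≤ 0` if `X₁ > 0`, and `1`
otherwise. -/
def tauRW (X : ℕ → Ω → ℝ) (ω : Ω) : ℕ∞ :=
  if 0 < X 0 ω then sInf {n : ℕ∞ | ∃ t : ℕ, n = (t : ℕ∞) ∧ 1 < t ∧ pS X t ω ≤ 0}
  else 1

/-- The number of level-crossings `L_α`: the number of `t ∈ {1, …, τ}` with
`S_{t-1} < α` and `S_t ≥ α`. -/
def nCross (X : ℕ → Ω → ℝ) (α : ℝ) (ω : Ω) : ℕ :=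
  Set.ncard {t : ℕ | 1 ≤ t ∧ (t : ℕ∞) ≤ tauRW X ω ∧ pS X (t - 1) ω < α ∧ α ≤ pS X t ω}

/-- The expected number of level-crossings `E L_α`. -/
def EL (μ : Measure Ω) (X : ℕ → Ω → ℝ) (α : ℝ) : ℝ :=
  ∫ ω, (nCross X α ω : ℝ) ∂μ

/-- The value `S_τ` of the walk at the stopping time (junk value `0` if `τ = ∞`). -/
def Stau (X : ℕ → Ω → ℝ) (ω : Ω) : ℝ :=
  pS X (tauRW X ω).toNat ω

/-- The pair `(t_i(α), τ_i(α))` of the `i`-th crossing time and the `i`-th descent time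
(junk values given by `sInf ∅ = 0` when they do not exist). -/
def cdTimes (X : ℕ → Ω → ℝ) (α : ℝ) : ℕ → Ω → ℕ × ℕ
  | 0 => fun _ => (0, 0)
  | (i + 1) => fun ω =>
      let t := sInf {t : ℕ | (cdTimes X α i ω).2 < t ∧ (t : ℕ∞) ≤ tauRW X ω ∧ α ≤ pS X t ω}
      (t, sInf {s : ℕ | t < s ∧ pS X s ω < α})

/-- The event `𝔄_i(α)`: the `i`-th crossing of the level `α` occurs during `[0, τ]`. -/
def crossEv (X : ℕ → Ω → ℝ) (α : ℝ) : ℕ → Set Ω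
  | 0 => Set.univ
  | (i + 1) => crossEv X α i ∩
      {ω | ∃ t : ℕ, (cdTimes X α i ω).2 < t ∧ (t : ℕ∞) ≤ tauRW X ω ∧ α ≤ pS X t ω}

/-- Assumption 1 of the paper at the level `α`: `P(𝔄₂(α)) > 0`,
`E[S_{t₁(α)-1} ∣ 𝔄₁(α)] > 0`, `E[S_{τ₁(α)} ∣ 𝔄₁(α)] > 0`,
`E[S_{t₂(α)-1} ∣ 𝔄₂(α)] = E[S_{t₁(α)-1} ∣ 𝔄₁(α)]` and
`E[S_{τ₂(α)} ∣ 𝔄₂(α)] = E[S_{τ₁(α)} ∣ 𝔄₁(α)]`. -/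
def Assumption1 (μ : Measure Ω) (X : ℕ → Ω → ℝ) (α : ℝ) : Prop :=
  0 < μ (crossEv X α 2) ∧
  0 < cexp μ (crossEv X α 1) (fun ω => pS X ((cdTimes X α 1 ω).1 - 1) ω) ∧
  0 < cexp μ (crossEv X α 1) (fun ω => pS X ((cdTimes X α 1 ω).2) ω) ∧
  cexp μ (crossEv X α 2) (fun ω => pS X ((cdTimes X α 2 ω).1 - 1) ω)
    = cexp μ (crossEv X α 1) (fun ω => pS X ((cdTimes X α 1 ω).1 - 1) ω) ∧
  cexp μ (crossEv X α 2) (fun ω => pS X ((cdTimes X α 2 ω).2) ω)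
    = cexp μ (crossEv X α 1) (fun ω => pS X ((cdTimes X α 1 ω).2) ω)

end

/-! Integer steps keep the walk integral. If `X₁ > 0` the walk is positive, hence at least `1`,
at every time in `[1, τ)`, so the level `1` can only be crossed at `t = 1`. Thus `L₁` is the
indicator of `X₁ ≥ 1`, whose probability is `P(X₁ ∈ {1, 2}) = 1/2`. -/

section Walk

variable {Ω : Type*} {X : ℕ → Ω → ℝ} {ω : Ω}

lemma pS_mem_range_intCast (hX : ∀ i, X i ω ∈ Set.range ((↑) : ℤ → ℝ)) (t : ℕ) :
    pS X t ω ∈ Set.range ((↑) : ℤ → ℝ) := by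
  induction t with
  | zero => exact ⟨0, by simp [pS]⟩
  | succ t ih =>
    obtain ⟨m, hm⟩ := ih
    obtain ⟨k, hk⟩ := hX t
    exact ⟨m + k, by simp [pS, hm, hk]⟩

lemma pS_one : pS X 1 ω = X 0 ω := by simp [pS]

lemma one_le_tauRW : 1 ≤ tauRW X ω := by
  unfold tauRW
  split_ifs
  · refine le_sInf ?_
    rintro n ⟨t, rfl, ht, -⟩
    exact_mod_cast ht.le
  · rfl

lemma tauRW_eq_one_of_nonpos (h : X 0 ω ≤ 0) : tauRW X ω = 1 := by
  simp [tauRW, h.not_gt]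

lemma pS_pos_of_lt_tauRW (h : 0 < X 0 ω) {t : ℕ} (ht : 1 ≤ t) (htτ : (t : ℕ∞) < tauRW X ω) :
    0 < pS X t ω := by
  obtain rfl | ht := ht.eq_or_lt
  · rwa [pS_one]
  by_contra! hle
  have : tauRW X ω ≤ t := by
    rw [tauRW, if_pos h]
    exact sInf_le ⟨t, rfl, ht, hle⟩
  exact htτ.not_ge this

lemma nCross_one_eq (hX : ∀ i, X i ω ∈ Set.range ((↑) : ℤ → ℝ)) :
    nCross X 1 ω = if 1 ≤ X 0 ω then 1 else 0 := by
  set C := {t : ℕ | 1 ≤ t ∧ (t : ℕ∞) ≤ tauRW X ω ∧ pS X (t - 1) ω < 1 ∧ 1 ≤ pS X t ω}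
  have hC : C ⊆ {1} := by
    rintro t ⟨ht, htτ, hlt, -⟩
    rw [Set.mem_singleton_iff]
    by_contra! hne
    have ht2 : 2 ≤ t := by omega
    have hτ : (1 : ℕ∞) < tauRW X ω := lt_of_lt_of_le (by exact_mod_cast ht2) htτ
    have hX0 : 0 < X 0 ω := by
      by_contra! h
      exact hτ.ne' (tauRW_eq_one_of_nonpos h)
    have hpos : 0 < pS X (t - 1) ω :=
      pS_pos_of_lt_tauRW hX0 (by omega) (lt_of_lt_of_le (by exact_mod_cast (by omega : t - 1 < t)) htτ)
    obtain ⟨k, hk⟩ := pS_mem_range_intCast hX (t - 1)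
    rw [← hk] at hpos hlt
    have : (1 : ℤ) ≤ k := by exact_mod_cast hpos
    exact absurd hlt (by exact_mod_cast this.not_gt)
  have h1C : 1 ∈ C ↔ 1 ≤ X 0 ω := by
    simp [C, one_le_tauRW, pS]
  change C.ncard = _
  split_ifs with h
  · rw [(Set.subset_singleton_iff_eq.mp hC).resolve_left (Set.nonempty_of_mem (h1C.2 h)).ne_empty,
      Set.ncard_singleton]
  · rw [(Set.subset_singleton_iff_eq.mp hC).resolve_right fun hC1 => h (h1C.1 (hC1 ▸ rfl)),
      Set.ncard_empty]

end Walk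

lemma ae_mem_of_sum_measure_singleton_eq_one {α : Type*} [MeasurableSpace α]
    [MeasurableSingletonClass α] {ν : Measure α} [IsProbabilityMeasure ν] {s : Finset α}
    (hs : ∑ x ∈ s, ν {x} = 1) : ∀ᵐ x ∂ν, x ∈ s := by
  rw [ae_iff]
  exact (prob_compl_eq_zero_iff s.measurableSet).2 (by simpa using hs)

variable {Ω : Type*} [MeasurableSpace Ω]

lemma EL_one_eq_measureReal_Ici {μ : Measure Ω} {X : ℕ → Ω → ℝ} (hX0 : AEMeasurable (X 0) μ)
    (hX : ∀ᵐ ω ∂μ, ∀ i, X i ω ∈ Set.range ((↑) : ℤ → ℝ)) :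
    EL μ X 1 = (μ.map (X 0)).real (Set.Ici 1) := by
  calc EL μ X 1 = ∫ ω, (Set.Ici (1 : ℝ)).indicator 1 (X 0 ω) ∂μ := by
        refine integral_congr_ae ?_
        filter_upwards [hX] with ω hω
        rw [nCross_one_eq hω]
        split_ifs with h <;> simp [h]
    _ = (μ.map (X 0)).real (Set.Ici 1) := by
        rw [← integral_indicator_one measurableSet_Ici, integral_map hX0]
        exact (stronglyMeasurable_const.indicator measurableSet_Ici).aestronglyMeasurable

theorem stmt12_general (μ : Measure Ω) [IsProbabilityMeasure μ]
    (X : ℕ → Ω → ℝ)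
    (hident : ∀ i, IdentDistrib (X i) (X 0) μ μ)
    (h1 : μ {ω | X 0 ω = -2} = 1 / 4) (h2 : μ {ω | X 0 ω = -1} = 1 / 4)
    (h3 : μ {ω | X 0 ω = 1} = 1 / 4) (h4 : μ {ω | X 0 ω = 2} = 1 / 4) :
    EL μ X 1 = 1 / 2 := by
  have hX0 : AEMeasurable (X 0) μ := (hident 0).aemeasurable_snd
  set ν := μ.map (X 0)
  have : IsProbabilityMeasure ν := Measure.isProbabilityMeasure_map hX0
  have hatom (c : ℝ) : ν {c} = μ {ω | X 0 ω = c} :=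
    Measure.map_apply_of_aemeasurable hX0 (measurableSet_singleton c)
  have hsupp : ∀ᵐ x ∂ν, x ∈ ({-2, -1, 1, 2} : Finset ℝ) := by
    refine ae_mem_of_sum_measure_singleton_eq_one ?_
    rw [Finset.sum_insert (by norm_num), Finset.sum_insert (by norm_num),
      Finset.sum_pair (by norm_num), hatom, hatom, hatom, hatom, h1, h2, h3, h4,
      ← ENNReal.toReal_eq_one_iff]
    norm_num [ENNReal.toReal_add]
  have hint : ∀ᵐ ω ∂μ, ∀ i, X i ω ∈ Set.range ((↑) : ℤ → ℝ) := by
    refine ae_all_iff.2 fun i =>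
      ((hident i).symm.ae_mem_snd (Finset.measurableSet _) (ae_of_ae_map hX0 hsupp)).mono ?_
    simp only [Finset.coe_insert, Finset.coe_singleton, Set.mem_insert_iff, Set.mem_singleton_iff]
    rintro ω (h | h | h | h) <;> rw [h]
    exacts [⟨-2, by simp⟩, ⟨-1, by simp⟩, ⟨1, by simp⟩, ⟨2, by simp⟩]
  have hIci : Set.Ici (1 : ℝ) =ᵐ[ν] ({1, 2} : Set ℝ) := by
    filter_upwards [hsupp] with x hx
    change (x ∈ Set.Ici 1) = (x ∈ ({1, 2} : Set ℝ))
    simp only [Finset.mem_insert, Finset.mem_singleton] at hx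
    rcases hx with rfl | rfl | rfl | rfl <;> norm_num
  rw [EL_one_eq_measureReal_Ici hX0 hint, measureReal_congr hIci, measureReal_def,
    ← Finset.coe_pair, ← sum_measure_singleton, Finset.sum_pair (by norm_num), hatom, hatom, h3, h4,
    ← ENNReal.add_div]
  norm_num

/-- For the purely symmetric random walk whose step takes each of the
values `-2, -1, 1, 2` with probability `1/4`, one has `E L_1 = 1/2`. -/
theorem stmt12 (μ : Measure Ω) [IsProbabilityMeasure μ]
    (X : ℕ → Ω → ℝ) (hmeas : ∀ i, Measurable (X i))
    (hindep : iIndepFun X μ)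
    (hident : ∀ i, IdentDistrib (X i) (X 0) μ μ)
    (h1 : μ {ω | X 0 ω = -2} = 1 / 4) (h2 : μ {ω | X 0 ω = -1} = 1 / 4)
    (h3 : μ {ω | X 0 ω = 1} = 1 / 4) (h4 : μ {ω | X 0 ω = 2} = 1 / 4) :
    EL μ X 1 = 1 / 2 :=
  stmt12_general μ X hident h1 h2 h3 h4
end

section
/- Let X₁, X₂, … be i.i.d. random variables with P(X₁ = 1) = 2/3 and P(X₁ = −2) = 1/3, and let S_t be the associated random walk. For every integer α ≥ 2 and every i ≥ 1 with P(𝔄_i(α)) > 0: conditionally on the event 𝔄_i(α), S_{t_i(α)−1} = α − 1 almost surely; moreover E[S_{τ₁(α)} | 𝔄₁(α)] > 0 and, when P(𝔄₂(α)) > 0, E[S_{τ₂(α)} | 𝔄₂(α)] = E[S_{τ₁(α)} | 𝔄₁(α)]. -/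
open MeasureTheory ProbabilityTheory Filter

noncomputable section

variable {Ω : Type*} [MeasurableSpace Ω]

/-! Since the steps are `1` or `-2`, the walk crosses an integer level `α` only by hitting it,
coming from `α - 1`. After the crossing time `t = t_i(α)` the walk starts afresh from `α`, so
`S_{τ_i(α)}` is `α` plus the first negative value of the walk formed by the steps after `t`.
The event `𝔄_i(α) ∩ {t_i(α) = c}` is, up to a null set, determined by the steps before `c`,
hence independent of the steps after `c`; summing over `c` gives
`E[S_{τ_i(α)}; 𝔄_i(α)] = P(𝔄_i(α)) · m` with a constant `m` that does not depend on `i`.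
The exceptional null set is where the walk eventually stays above `α`. It is null because the
walk has zero drift: `q_k = P(S_s ≥ -k for all s)` satisfies `q_k = 2/3 q_{k+1} + 1/3 q_{k-2}`,
so `2 q_{k+1} - q_k - q_{k-1} = 2 q_0` for all `k ≥ 0`; monotonicity then gives
`q_{k+1} ≥ q_{k-1} + q_0`, boundedness forces `q_0 = 0`, and then `q` vanishes.
Finally `m > 0`: the value `α + S` at the first negative value `S ∈ {-1, -2}` is at least
`α - 2 ≥ 0`, and equals `α - 1` when the walk starts with the steps `1, -2`. -/

namespace LevelCrossing

variable {Ω : Type*} {mΩ : MeasurableSpace Ω} {μ : Measure Ω} {X Y : ℕ → Ω → ℝ} {ω : Ω}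

def shiftSteps (X : ℕ → Ω → ℝ) (c : ℕ) : ℕ → Ω → ℝ := fun i => X (c + i)

def stepSeq (X : ℕ → Ω → ℝ) (ω : Ω) : ℕ → ℝ := fun i => X i ω

def coordSteps : ℕ → (ℕ → ℝ) → ℝ := fun i x => x i

def stepsIn (X : ℕ → Ω → ℝ) : Set Ω := {ω | ∀ i, X i ω = 1 ∨ X i ω = -2}

@[simp] lemma pS_zero : pS X 0 ω = 0 := rfl

lemma pS_succ (t : ℕ) : pS X (t + 1) ω = pS X t ω + X t ω := rfl

@[simp] lemma pS_one : pS X 1 ω = X 0 ω := zero_add _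

lemma pS_add (c s : ℕ) : pS X (c + s) ω = pS X c ω + pS (shiftSteps X c) s ω := by
  induction s with
  | zero => simp
  | succ s ih => rw [← add_assoc, pS_succ, ih, pS_succ, shiftSteps]; ring

lemma pS_stepSeq (t : ℕ) : pS coordSteps t (stepSeq X ω) = pS X t ω := by
  induction t with
  | zero => rfl
  | succ t ih => rw [pS_succ, pS_succ, ih]; rfl

lemma pS_congr {c t : ℕ} (h : ∀ n < c, X n ω = Y n ω) (ht : t ≤ c) :
    pS X t ω = pS Y t ω := by
  induction t with
  | zero => rfl
  | succ t ih => rw [pS_succ, pS_succ, ih (by omega), h t (by omega)]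

lemma exists_int_pS (hω : ω ∈ stepsIn X) (t : ℕ) : ∃ z : ℤ, pS X t ω = z := by
  induction t with
  | zero => exact ⟨0, by simp⟩
  | succ t ih =>
    obtain ⟨z, hz⟩ := ih
    rcases hω t with h | h
    · exact ⟨z + 1, by rw [pS_succ, hz, h]; push_cast; ring⟩
    · exact ⟨z - 2, by rw [pS_succ, hz, h]; push_cast; ring⟩

lemma exists_lt_pS_lt {A : ℝ} (hfreq : ∃ᶠ s in atTop, pS X s ω < A) (t : ℕ) :
    ∃ s, t < s ∧ pS X s ω < A :=
  (frequently_atTop.1 hfreq (t + 1)).imp fun _ hs => ⟨hs.1, hs.2⟩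

lemma le_tauRW_iff (t : ℕ) :
    (t : ℕ∞) ≤ tauRW X ω ↔ t ≤ 1 ∨ (0 < X 0 ω ∧ ∀ s, 1 < s → s < t → 0 < pS X s ω) := by
  unfold tauRW
  split_ifs with h
  · simp only [le_sInf_iff, Set.mem_ofPred_eq, forall_exists_index, and_imp]
    constructor
    · intro hle
      refine or_iff_not_imp_left.2 fun ht => ⟨h, fun s hs1 hst => ?_⟩
      by_contra! hs
      exact absurd (hle _ s rfl hs1 hs) (by exact_mod_cast hst.not_ge)
    · rintro (ht | ⟨-, hpos⟩) n s rfl hs1 hs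
      · exact_mod_cast ht.trans hs1.le
      · exact_mod_cast not_lt.1 fun hst => (hpos s hs1 hst).not_ge hs
  · simp [h]

lemma le_tauRW_congr {c t : ℕ} (h : ∀ n < c, X n ω = Y n ω) (ht : t ≤ c) :
    (t : ℕ∞) ≤ tauRW X ω ↔ (t : ℕ∞) ≤ tauRW Y ω := by
  rw [le_tauRW_iff, le_tauRW_iff]
  rcases Nat.lt_or_ge 1 t with h1 | h1
  · rw [h 0 (by omega)]
    refine or_congr_right (and_congr_right fun _ => forall_congr' fun s => ?_)
    refine imp_congr_right fun _ => imp_congr_right fun hs => ?_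
    rw [pS_congr h (by omega : s ≤ c)]
  · simp [h1]

lemma sInf_congr_of_mem {P Q : Set ℕ} {a c : ℕ} (hPQ : ∀ t ≤ c, t ∈ P ↔ t ∈ Q)
    (ha : a ∈ P) (hac : a ≤ c) : sInf Q = sInf P := by
  have hP := Nat.sInf_mem ⟨a, ha⟩
  have hle : sInf P ≤ c := (Nat.sInf_le ha).trans hac
  refine le_antisymm (Nat.sInf_le ((hPQ _ hle).1 hP)) (le_csInf ⟨_, (hPQ _ hle).1 hP⟩ ?_)
  exact fun t ht => not_lt.1 fun hlt => Nat.notMem_of_lt_sInf hlt ((hPQ t (by omega)).2 ht)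

section CrossingTimes

variable {A : ℝ} {i : ℕ}

lemma fst_cdTimes_succ_mem (h : ω ∈ crossEv X A (i + 1)) :
    (cdTimes X A i ω).2 < (cdTimes X A (i + 1) ω).1 ∧
      ((cdTimes X A (i + 1) ω).1 : ℕ∞) ≤ tauRW X ω ∧ A ≤ pS X (cdTimes X A (i + 1) ω).1 ω :=
  Nat.sInf_mem h.2

lemma snd_cdTimes_succ_mem (hfreq : ∃ᶠ s in atTop, pS X s ω < A) :
    (cdTimes X A (i + 1) ω).1 < (cdTimes X A (i + 1) ω).2 ∧
      pS X (cdTimes X A (i + 1) ω).2 ω < A :=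
  Nat.sInf_mem (exists_lt_pS_lt hfreq _)

lemma fst_le_snd_cdTimes (hfreq : ∃ᶠ s in atTop, pS X s ω < A) :
    (cdTimes X A i ω).1 ≤ (cdTimes X A i ω).2 := by
  cases i with
  | zero => exact le_rfl
  | succ i => exact (snd_cdTimes_succ_mem hfreq).1.le

lemma pS_snd_cdTimes_lt (hA : 0 < A) : pS X (cdTimes X A i ω).2 ω < A := by
  cases i with
  | zero => simpa [cdTimes] using hA
  | succ i =>
    change pS X (sInf {s | (cdTimes X A (i + 1) ω).1 < s ∧ pS X s ω < A}) ω < A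
    rcases Set.eq_empty_or_nonempty {s | (cdTimes X A (i + 1) ω).1 < s ∧ pS X s ω < A}
      with he | hne
    · simpa [he] using hA
    · exact (Nat.sInf_mem hne).2

lemma pS_pred_fst_cdTimes_lt (hA : 0 < A) (h : ω ∈ crossEv X A (i + 1)) :
    pS X ((cdTimes X A (i + 1) ω).1 - 1) ω < A := by
  obtain ⟨hbt, htau, -⟩ := fst_cdTimes_succ_mem h
  rcases eq_or_lt_of_le (show (cdTimes X A i ω).2 ≤ (cdTimes X A (i + 1) ω).1 - 1 by omega)
    with heq | hlt
  · rw [← heq]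
    exact pS_snd_cdTimes_lt hA
  · have hnot := Nat.notMem_of_lt_sInf (show (cdTimes X A (i + 1) ω).1 - 1 <
      sInf {t | (cdTimes X A i ω).2 < t ∧ (t : ℕ∞) ≤ tauRW X ω ∧ A ≤ pS X t ω} by
        change _ < (cdTimes X A (i + 1) ω).1; omega)
    simp only [Set.mem_ofPred_eq, not_and, not_le] at hnot
    exact hnot hlt (le_trans (by exact_mod_cast Nat.sub_le _ 1) htau)

lemma pS_fst_cdTimes {α : ℤ} (hα : 0 < α) (hω : ω ∈ stepsIn X)
    (h : ω ∈ crossEv X α (i + 1)) :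
    pS X ((cdTimes X α (i + 1) ω).1 - 1) ω = α - 1 ∧ pS X (cdTimes X α (i + 1) ω).1 ω = α := by
  set t := (cdTimes X α (i + 1) ω).1
  have hlt := pS_pred_fst_cdTimes_lt (by exact_mod_cast hα) h
  obtain ⟨hbt, -, hge⟩ := fst_cdTimes_succ_mem h
  have hstep : pS X t ω = pS X (t - 1) ω + X (t - 1) ω := by
    rw [← pS_succ, Nat.sub_add_cancel (by omega)]
  obtain ⟨z, hz⟩ := exists_int_pS hω (t - 1)
  rw [hstep, hz] at hge
  rw [hz] at hlt
  rcases hω (t - 1) with hx | hx <;> rw [hx] at hge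
  · have hzα : z = α - 1 := by
      have : z < α := by exact_mod_cast hlt
      have : α ≤ z + 1 := by exact_mod_cast hge
      omega
    refine ⟨by rw [hz, hzα]; push_cast; ring, ?_⟩
    rw [hstep, hz, hx, hzα]; push_cast; ring
  · linarith

end CrossingTimes

/-- `0` if the walk never becomes negative. -/
def firstNegTime (Y : ℕ → Ω → ℝ) (ω : Ω) : ℕ := sInf {s | 0 < s ∧ pS Y s ω < 0}

/-- The position, at its first descent below `A`, of the walk started at `A`. -/
def descentValue (A : ℝ) (Y : ℕ → Ω → ℝ) (ω : Ω) : ℝ := A + pS Y (firstNegTime Y ω) ω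

lemma descentValue_mem_Icc (A : ℝ) (hω : ω ∈ stepsIn Y) :
    descentValue A Y ω ∈ Set.Icc (A - 2) A := by
  rcases Set.eq_empty_or_nonempty {s | 0 < s ∧ pS Y s ω < 0} with he | hne
  · simp [descentValue, firstNegTime, he]
  obtain ⟨hpos, hneg⟩ : 0 < firstNegTime Y ω ∧ pS Y (firstNegTime Y ω) ω < 0 :=
    Nat.sInf_mem hne
  set d := firstNegTime Y ω
  have hprev : 0 ≤ pS Y (d - 1) ω := by
    rcases Nat.eq_zero_or_pos (d - 1) with h0 | h0
    · simp [h0]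
    · have := Nat.notMem_of_lt_sInf (show d - 1 < sInf {s | 0 < s ∧ pS Y s ω < 0} by
        change d - 1 < d; omega)
      simpa [h0] using this
  have hstep : pS Y d ω = pS Y (d - 1) ω + Y (d - 1) ω := by
    rw [← pS_succ, Nat.sub_add_cancel hpos]
  constructor <;> rcases hω (d - 1) with hx | hx <;>
    simp only [descentValue] <;> linarith

lemma descentValue_stepSeq (A : ℝ) :
    descentValue A coordSteps (stepSeq Y ω) = descentValue A Y ω := by
  simp only [descentValue, firstNegTime, pS_stepSeq]

lemma snd_cdTimes_succ_eq {A : ℝ} {i : ℕ} (hfreq : ∃ᶠ s in atTop, pS X s ω < A)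
    (hA : pS X (cdTimes X A (i + 1) ω).1 ω = A) :
    (cdTimes X A (i + 1) ω).2 =
      (cdTimes X A (i + 1) ω).1 + firstNegTime (shiftSteps X (cdTimes X A (i + 1) ω).1) ω := by
  set t := (cdTimes X A (i + 1) ω).1
  change sInf {s | t < s ∧ pS X s ω < A} = t + sInf {s | 0 < s ∧ pS (shiftSteps X t) s ω < 0}
  have ht : t ≤ sInf {s | t < s ∧ pS X s ω < A} :=
    (Nat.sInf_mem (exists_lt_pS_lt hfreq t)).1.le
  rw [← Nat.sInf_add ht, add_comm]
  congr 2 with s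
  simp only [Set.mem_ofPred_eq]
  rw [add_comm s t, pS_add, hA]
  constructor <;> rintro ⟨h1, h2⟩ <;> exact ⟨by omega, by linarith⟩

lemma pS_snd_cdTimes_succ {α : ℤ} {i : ℕ} (hα : 0 < α) (hω : ω ∈ stepsIn X)
    (hfreq : ∃ᶠ s in atTop, pS X s ω < α) (h : ω ∈ crossEv X α (i + 1)) :
    pS X (cdTimes X α (i + 1) ω).2 ω =
      descentValue α (shiftSteps X (cdTimes X α (i + 1) ω).1) ω := by
  have hA := (pS_fst_cdTimes hα hω h).2
  rw [snd_cdTimes_succ_eq hfreq hA, pS_add, hA, descentValue]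

section Congr

variable {A : ℝ} {c : ℕ}

lemma snd_cdTimes_congr (h : ∀ n < c, X n ω = Y n ω) (hfreq : ∃ᶠ s in atTop, pS X s ω < A)
    {i : ℕ} (hfst : (cdTimes Y A i ω).1 = (cdTimes X A i ω).1)
    (hc : (cdTimes X A i ω).2 ≤ c) : (cdTimes Y A i ω).2 = (cdTimes X A i ω).2 := by
  cases i with
  | zero => rfl
  | succ i =>
    change sInf {s | (cdTimes Y A (i + 1) ω).1 < s ∧ pS Y s ω < A} =
      sInf {s | (cdTimes X A (i + 1) ω).1 < s ∧ pS X s ω < A}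
    rw [hfst]
    refine sInf_congr_of_mem (fun s hs => ?_) (snd_cdTimes_succ_mem hfreq) hc
    simp only [Set.mem_ofPred_eq, pS_congr h hs]

/-- Under `hfreq` no descent time takes the junk value `0`, so the crossing and descent times
up to `c` are read off from the steps before `c`. -/
lemma crossEv_congr (h : ∀ n < c, X n ω = Y n ω) (hfreq : ∃ᶠ s in atTop, pS X s ω < A) :
    ∀ i, ω ∈ crossEv X A i → (cdTimes X A i ω).1 ≤ c →
      ω ∈ crossEv Y A i ∧ (cdTimes Y A i ω).1 = (cdTimes X A i ω).1
  | 0, _, _ => ⟨trivial, rfl⟩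
  | i + 1, hmem, hle => by
    have hX := fst_cdTimes_succ_mem hmem
    have hτ : (cdTimes X A i ω).2 ≤ c := by omega
    obtain ⟨hmemY, hfstY⟩ :=
      crossEv_congr h hfreq i hmem.1 ((fst_le_snd_cdTimes hfreq).trans hτ)
    have hPQ : ∀ t ≤ c,
        t ∈ {t | (cdTimes X A i ω).2 < t ∧ (t : ℕ∞) ≤ tauRW X ω ∧ A ≤ pS X t ω} ↔
          t ∈ {t | (cdTimes Y A i ω).2 < t ∧ (t : ℕ∞) ≤ tauRW Y ω ∧ A ≤ pS Y t ω} := by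
      intro t ht
      simp only [Set.mem_ofPred_eq, snd_cdTimes_congr h hfreq hfstY hτ, le_tauRW_congr h ht,
        pS_congr h ht]
    exact ⟨⟨hmemY, _, (hPQ _ hle).1 hX⟩, sInf_congr_of_mem hPQ hX hle⟩

/-- Steps `-1` after time `c` make the walk return below every level. -/
def truncSteps (X : ℕ → Ω → ℝ) (c : ℕ) : ℕ → Ω → ℝ := fun n ω => if n < c then X n ω else -1

lemma truncSteps_of_lt (ω : Ω) {n : ℕ} (hn : n < c) : truncSteps X c n ω = X n ω :=
  if_pos hn

lemma frequently_pS_truncSteps_lt (A : ℝ) (ω : Ω) :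
    ∃ᶠ s in atTop, pS (truncSteps X c) s ω < A := by
  have htail : ∀ u, pS (shiftSteps (truncSteps X c) c) u ω = -u := by
    intro u
    induction u with
    | zero => simp
    | succ u ih => rw [pS_succ, ih]; simp [shiftSteps, truncSteps]; ring
  refine frequently_atTop.2 fun a =>
    ⟨c + (a + ⌈pS (truncSteps X c) c ω - A⌉₊ + 1), by omega, ?_⟩
  rw [pS_add, htail]
  push_cast
  linarith [Nat.le_ceil (pS (truncSteps X c) c ω - A)]

lemma mem_crossEv_fst_eq_iff_truncSteps (hfreq : ∃ᶠ s in atTop, pS X s ω < A) (i : ℕ) :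
    (ω ∈ crossEv X A i ∧ (cdTimes X A i ω).1 = c) ↔
      (ω ∈ crossEv (truncSteps X c) A i ∧ (cdTimes (truncSteps X c) A i ω).1 = c) := by
  constructor
  · rintro ⟨hmem, rfl⟩
    exact crossEv_congr (fun n hn => (truncSteps_of_lt ω hn).symm) hfreq i hmem le_rfl
  · rintro ⟨hmem, hc⟩
    obtain ⟨h1, h2⟩ := crossEv_congr (fun n hn => truncSteps_of_lt ω hn)
      (frequently_pS_truncSteps_lt A ω) i hmem hc.le
    exact ⟨h1, h2.trans hc⟩

end Congr

lemma measurable_coordSteps (i : ℕ) : Measurable (coordSteps i) := measurable_pi_apply i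

lemma measurable_pS (hX : ∀ i, Measurable (X i)) : ∀ t, Measurable (pS X t)
  | 0 => measurable_const
  | t + 1 => (measurable_pS hX t).add (hX t)

lemma measurable_pS_comp (hX : ∀ i, Measurable (X i)) {N : Ω → ℕ} (hN : Measurable N) :
    Measurable fun ω => pS X (N ω) ω :=
  (measurable_from_prod_countable_right (f := fun p : ℕ × Ω => pS X p.1 p.2)
    (measurable_pS hX)).comp (hN.prodMk measurable_id)

lemma measurable_sInf_setOf {p : ℕ → Ω → Prop} (hp : ∀ n, Measurable (p n)) :
    Measurable fun ω => sInf {n | p n ω} := by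
  refine measurable_to_countable' fun d => ?_
  have : (fun ω => sInf {n | p n ω}) ⁻¹' {d} =
      {ω | (p d ω ∧ ∀ n < d, ¬ p n ω) ∨ (d = 0 ∧ ∀ n, ¬ p n ω)} := by
    ext ω
    simp only [Set.mem_preimage, Set.mem_singleton_iff, Set.mem_ofPred_eq]
    constructor
    · rintro rfl
      rcases Set.eq_empty_or_nonempty {n | p n ω} with he | hne
      · exact Or.inr ⟨by simp [he], fun n hn => he.subset hn⟩
      · exact Or.inl ⟨Nat.sInf_mem hne, fun n hn => Nat.notMem_of_lt_sInf hn⟩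
    · rintro (⟨hd, hmin⟩ | ⟨rfl, hnone⟩)
      · exact IsLeast.csInf_eq ⟨hd, fun n hn => not_lt.1 fun h => hmin n h hn⟩
      · exact (congrArg sInf (Set.eq_empty_of_forall_notMem hnone)).trans Nat.sInf_empty
  rw [this]
  exact measurableSet_setOfPred.2 (by fun_prop)

lemma measurable_le_tauRW (hX : ∀ i, Measurable (X i)) (t : ℕ) :
    Measurable fun ω => (t : ℕ∞) ≤ tauRW X ω := by
  have := measurable_pS hX
  simp only [le_tauRW_iff]
  fun_prop

lemma measurable_cdTimes (hX : ∀ i, Measurable (X i)) (A : ℝ) :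
    ∀ i, Measurable (fun ω => (cdTimes X A i ω).1) ∧ Measurable (fun ω => (cdTimes X A i ω).2)
  | 0 => ⟨measurable_const, measurable_const⟩
  | i + 1 => by
    have hpS := measurable_pS hX
    have htau := measurable_le_tauRW hX
    have hsnd := (measurable_cdTimes hX A i).2
    have hfst : Measurable fun ω => (cdTimes X A (i + 1) ω).1 :=
      measurable_sInf_setOf fun t => by fun_prop
    refine ⟨hfst, ?_⟩
    change Measurable fun ω => sInf {s | (cdTimes X A (i + 1) ω).1 < s ∧ pS X s ω < A}
    exact measurable_sInf_setOf fun s => by fun_prop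

lemma measurableSet_crossEv (hX : ∀ i, Measurable (X i)) (A : ℝ) :
    ∀ i, MeasurableSet (crossEv X A i)
  | 0 => MeasurableSet.univ
  | i + 1 => by
    have hpS := measurable_pS hX
    have htau := measurable_le_tauRW hX
    have hsnd := (measurable_cdTimes hX A i).2
    exact (measurableSet_crossEv hX A i).inter (measurableSet_setOfPred.2 (by fun_prop))

lemma measurable_descentValue (hY : ∀ i, Measurable (Y i)) (A : ℝ) :
    Measurable (descentValue A Y) := by
  have hpS := measurable_pS hY
  exact measurable_const.add
    (measurable_pS_comp hY (measurable_sInf_setOf fun s => by fun_prop))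

section Independence

abbrev stepsBefore (X : ℕ → Ω → ℝ) (c : ℕ) : MeasurableSpace Ω :=
  ⨆ i ∈ Set.Iio c, MeasurableSpace.comap (X i) inferInstance

abbrev stepsFrom (X : ℕ → Ω → ℝ) (c : ℕ) : MeasurableSpace Ω :=
  ⨆ i ∈ Set.Ici c, MeasurableSpace.comap (X i) inferInstance

lemma stepsBefore_le (hmeas : ∀ i, Measurable (X i)) (c : ℕ) : stepsBefore X c ≤ mΩ :=
  iSup₂_le fun i _ => (hmeas i).comap_le

lemma indep_stepsBefore_stepsFrom (hmeas : ∀ i, Measurable (X i)) (hindep : iIndepFun X μ)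
    (c : ℕ) : Indep (stepsBefore X c) (stepsFrom X c) μ :=
  indep_iSup_of_disjoint (fun i => (hmeas i).comap_le) hindep (Set.Iio_disjoint_Ici le_rfl)

lemma measurable_stepsBefore {c n : ℕ} (hn : n < c) : Measurable[stepsBefore X c] (X n) :=
  Measurable.of_comap_le
    (le_iSup₂ (f := fun i (_ : i ∈ Set.Iio c) => MeasurableSpace.comap (X i) inferInstance) n hn)

lemma measurable_truncSteps (c n : ℕ) : Measurable[stepsBefore X c] (truncSteps X c n) := by
  by_cases hn : n < c
  · rw [show truncSteps X c n = X n from funext fun ω => truncSteps_of_lt ω hn]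
    exact measurable_stepsBefore hn
  · rw [show truncSteps X c n = fun _ => -1 from funext fun ω => if_neg hn]
    exact measurable_const

lemma measurable_stepSeq_shiftSteps (c : ℕ) :
    Measurable[stepsFrom X c] (stepSeq (shiftSteps X c)) :=
  @measurable_pi_lambda _ _ _ (stepsFrom X c) _ _ fun i => Measurable.of_comap_le
    (le_iSup₂ (f := fun i (_ : i ∈ Set.Ici c) => MeasurableSpace.comap (X i) inferInstance)
      (c + i) (Nat.le_add_right c i))

lemma identDistrib_stepSeq_shiftSteps [IsProbabilityMeasure μ] (hmeas : ∀ i, Measurable (X i))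
    (hindep : iIndepFun X μ) (hident : ∀ i, IdentDistrib (X i) (X 0) μ μ) (c : ℕ) :
    IdentDistrib (stepSeq (shiftSteps X c)) (stepSeq X) μ μ where
  aemeasurable_fst := (measurable_pi_lambda _ fun i => hmeas (c + i)).aemeasurable
  aemeasurable_snd := (measurable_pi_lambda _ hmeas).aemeasurable
  map_eq := by
    have hlaw : ∀ Y : ℕ → Ω → ℝ, (∀ i, Measurable (Y i)) → iIndepFun Y μ →
        (∀ i, IdentDistrib (Y i) (X 0) μ μ) →
        μ.map (stepSeq Y) = Measure.infinitePi fun _ => μ.map (X 0) := by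
      intro Y hY hYind hYid
      rw [show stepSeq Y = fun ω i => Y i ω from rfl, hYind.map_fun_eq_infinitePi_map hY]
      simp_rw [(hYid _).map_eq]
    exact (hlaw _ (fun i => hmeas (c + i)) (hindep.precomp (add_right_injective c))
      fun i => hident (c + i)).trans (hlaw X hmeas hindep hident).symm

lemma measure_inter_preimage_stepSeq_shiftSteps [IsProbabilityMeasure μ]
    (hmeas : ∀ i, Measurable (X i)) (hindep : iIndepFun X μ)
    (hident : ∀ i, IdentDistrib (X i) (X 0) μ μ) {c : ℕ} {E : Set Ω}
    (hE : MeasurableSet[stepsBefore X c] E) {B : Set (ℕ → ℝ)} (hB : MeasurableSet B) :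
    μ (E ∩ stepSeq (shiftSteps X c) ⁻¹' B) = μ E * μ (stepSeq X ⁻¹' B) := by
  rw [(Indep_iff _ _ μ).1 (indep_stepsBefore_stepsFrom hmeas hindep c) _ _ hE
    (measurable_stepSeq_shiftSteps c hB),
    (identDistrib_stepSeq_shiftSteps hmeas hindep hident c).measure_mem_eq hB]

lemma setIntegral_comp_stepSeq_shiftSteps [IsProbabilityMeasure μ]
    (hmeas : ∀ i, Measurable (X i)) (hindep : iIndepFun X μ)
    (hident : ∀ i, IdentDistrib (X i) (X 0) μ μ) {c : ℕ} {E : Set Ω}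
    (hE : MeasurableSet[stepsBefore X c] E) {G : (ℕ → ℝ) → ℝ} (hG : Measurable G) :
    ∫ ω in E, G (stepSeq (shiftSteps X c) ω) ∂μ = μ.real E * ∫ ω, G (stepSeq X ω) ∂μ := by
  have hEm : MeasurableSet E := stepsBefore_le hmeas c E hE
  have hind : IndepFun (E.indicator (1 : Ω → ℝ)) (fun ω => G (stepSeq (shiftSteps X c) ω)) μ :=
    (IndepFun_iff_Indep _ _ μ).2 <| indep_of_indep_of_le_right
      (indep_of_indep_of_le_left (indep_stepsBefore_stepsFrom hmeas hindep c)
        (Measurable.indicator (m := stepsBefore X c) (f := fun _ => (1 : ℝ))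
          measurable_const hE).comap_le)
      (hG.comp (measurable_stepSeq_shiftSteps c)).comap_le
  have hprod := hind.integral_mul_eq_mul_integral
    (measurable_const.indicator hEm).aestronglyMeasurable
    (hG.comp (measurable_pi_lambda _ fun i => hmeas (c + i))).aestronglyMeasurable
  calc ∫ ω in E, G (stepSeq (shiftSteps X c) ω) ∂μ
      = ∫ ω, (E.indicator (1 : Ω → ℝ) * fun ω => G (stepSeq (shiftSteps X c) ω)) ω ∂μ := by
        rw [← integral_indicator hEm]
        congr 1 with ω
        by_cases hω : ω ∈ E <;> simp [hω]
    _ = μ.real E * ∫ ω, G (stepSeq (shiftSteps X c) ω) ∂μ := by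
        rw [hprod, integral_indicator_one hEm]
    _ = μ.real E * ∫ ω, G (stepSeq X ω) ∂μ :=
        congrArg _ ((identDistrib_stepSeq_shiftSteps hmeas hindep hident c).comp hG).integral_eq

end Independence

section Recurrence

lemma ae_stepsIn [IsProbabilityMeasure μ] (hmeas : ∀ i, Measurable (X i))
    (hident : ∀ i, IdentDistrib (X i) (X 0) μ μ)
    (h1 : μ {ω | X 0 ω = 1} = 2 / 3) (h2 : μ {ω | X 0 ω = -2} = 1 / 3) :
    ∀ᵐ ω ∂μ, ω ∈ stepsIn X := by
  have hB : MeasurableSet ({1, -2} : Set ℝ) := (measurableSet_singleton _).insert _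
  have hdisj : Disjoint {ω | X 0 ω = 1} {ω | X 0 ω = -2} :=
    Set.disjoint_left.2 fun ω (h : X 0 ω = 1) (h' : X 0 ω = -2) => by norm_num [h] at h'
  have hprob : μ (X 0 ⁻¹' {1, -2}) = 1 := by
    rw [show X 0 ⁻¹' {1, -2} = {ω | X 0 ω = 1} ∪ {ω | X 0 ω = -2} from rfl,
      measure_union hdisj (hmeas 0 (measurableSet_singleton _)), h1, h2,
      ENNReal.div_add_div_same, show (2 : ENNReal) + 1 = 3 by norm_num]
    exact ENNReal.div_self (by norm_num) (by norm_num)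
  have h0 : ∀ᵐ ω ∂μ, X 0 ω ∈ ({1, -2} : Set ℝ) :=
    ae_iff.2 ((prob_compl_eq_zero_iff (hmeas 0 hB)).2 hprob)
  exact ae_all_iff.2 fun i => (hident i).symm.ae_mem_snd hB h0

lemma eq_zero_of_recurrence {q : ℤ → ℝ} (hmono : Monotone q) (hbdd : BddAbove (Set.range q))
    (hneg : ∀ k < 0, q k = 0) (hrec : ∀ k ≥ 0, q k = 2 / 3 * q (k + 1) + 1 / 3 * q (k - 2))
    (k : ℤ) : q k = 0 := by
  have hJ : ∀ n : ℕ, 2 * q (n + 1) - q n - q (n - 1) = 2 * q 0 := by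
    intro n
    induction n with
    | zero =>
      have := hrec 0 le_rfl
      simp only [Nat.cast_zero, zero_add, zero_sub] at this ⊢
      linarith [hneg (-1) (by norm_num), hneg (-2) (by norm_num)]
    | succ n ih =>
      have := hrec (n + 1) (by positivity)
      simp only [Nat.cast_succ, add_sub_cancel_right] at this ⊢
      rw [show (n : ℤ) + 1 - 2 = n - 1 by ring] at this
      linarith
  have hstep : ∀ n : ℕ, q (n - 1) + q 0 ≤ q (n + 1) := fun n => by
    linarith [hJ n, hmono (show (n : ℤ) - 1 ≤ n by omega)]
  have hlin : ∀ m : ℕ, m * q 0 ≤ q (2 * m - 1) := by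
    intro m
    induction m with
    | zero => simp [hneg (-1) (by norm_num)]
    | succ m ih =>
      have := hstep (2 * m)
      push_cast at this ⊢
      rw [show 2 * ((m : ℤ) + 1) - 1 = 2 * m + 1 by ring]
      linarith
  have hq0 : q 0 = 0 := by
    obtain ⟨M, hM⟩ := hbdd
    refine le_antisymm (not_lt.1 fun hpos => ?_) (hneg (-1) (by norm_num) ▸ hmono (by norm_num))
    obtain ⟨m, hm⟩ := exists_nat_gt (M / q 0)
    linarith [(div_lt_iff₀ hpos).1 hm, hlin m, hM ⟨2 * m - 1, rfl⟩]
  have hconst : ∀ n : ℕ, q n = 0 := by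
    intro n
    induction n with
    | zero => exact hq0
    | succ n ih =>
      push_cast
      linarith [hJ n, hmono (show (n : ℤ) - 1 ≤ n by omega), hmono (show (n : ℤ) ≤ n + 1 by omega)]
  rcases lt_or_ge k 0 with hk | hk
  · exact hneg k hk
  · lift k to ℕ using hk
    exact hconst k

def staysAbove (X : ℕ → Ω → ℝ) (r : ℝ) : Set Ω := {ω | ∀ s, r ≤ pS X s ω}

lemma preimage_stepSeq_staysAbove (r : ℝ) :
    stepSeq X ⁻¹' staysAbove coordSteps r = staysAbove X r := by
  ext ω
  simp only [staysAbove, Set.mem_preimage, Set.mem_ofPred_eq, pS_stepSeq]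

lemma measurableSet_staysAbove (hX : ∀ i, Measurable (X i)) (r : ℝ) :
    MeasurableSet (staysAbove X r) := by
  have := measurable_pS hX
  exact measurableSet_setOfPred.2 (by fun_prop)

lemma mem_staysAbove_iff {r : ℝ} (hr : r ≤ 0) :
    ω ∈ staysAbove X r ↔ ω ∈ staysAbove (shiftSteps X 1) (r - X 0 ω) := by
  constructor
  · intro h s
    have := h (1 + s)
    rw [pS_add, pS_one] at this
    linarith
  · rintro h (_ | s)
    · simpa using hr
    · have := h s
      rw [add_comm s 1, pS_add, pS_one]
      linarith

lemma measure_staysAbove [IsProbabilityMeasure μ] (hmeas : ∀ i, Measurable (X i))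
    (hindep : iIndepFun X μ) (hident : ∀ i, IdentDistrib (X i) (X 0) μ μ)
    (h1 : μ {ω | X 0 ω = 1} = 2 / 3) (h2 : μ {ω | X 0 ω = -2} = 1 / 3) {r : ℝ} (hr : r ≤ 0) :
    μ (staysAbove X r) = 2 / 3 * μ (staysAbove X (r - 1)) + 1 / 3 * μ (staysAbove X (r + 2)) := by
  have hpiece : ∀ x : ℝ, μ ({ω | X 0 ω = x} ∩ staysAbove (shiftSteps X 1) (r - x)) =
      μ {ω | X 0 ω = x} * μ (staysAbove X (r - x)) := fun x => by
    rw [← preimage_stepSeq_staysAbove, measure_inter_preimage_stepSeq_shiftSteps hmeas hindep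
      hident (E := {ω | X 0 ω = x})
      (measurable_stepsBefore (by norm_num) (measurableSet_singleton x))
      (measurableSet_staysAbove measurable_coordSteps _), preimage_stepSeq_staysAbove]
  have hae : staysAbove X r =ᵐ[μ]
      (({ω | X 0 ω = 1} ∩ staysAbove (shiftSteps X 1) (r - 1)) ∪
        ({ω | X 0 ω = -2} ∩ staysAbove (shiftSteps X 1) (r - -2)) : Set Ω) := by
    refine Filter.eventuallyEq_set.2 ?_
    filter_upwards [ae_stepsIn hmeas hident h1 h2] with ω hω
    rw [mem_staysAbove_iff hr]
    rcases hω 0 with h | h <;> norm_num [h]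
  have hdisj : Disjoint ({ω | X 0 ω = 1} ∩ staysAbove (shiftSteps X 1) (r - 1))
      ({ω | X 0 ω = -2} ∩ staysAbove (shiftSteps X 1) (r - -2)) :=
    Set.disjoint_left.2 fun ω ⟨(h : X 0 ω = 1), _⟩ ⟨(h' : X 0 ω = -2), _⟩ => by
      norm_num [h] at h'
  rw [measure_congr hae, measure_union hdisj (((hmeas 0) (measurableSet_singleton _)).inter
    (measurableSet_staysAbove (fun i => hmeas (1 + i)) _)), hpiece, hpiece, h1, h2, sub_neg_eq_add]

lemma measure_staysAbove_neg_eq_zero [IsProbabilityMeasure μ] (hmeas : ∀ i, Measurable (X i))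
    (hindep : iIndepFun X μ) (hident : ∀ i, IdentDistrib (X i) (X 0) μ μ)
    (h1 : μ {ω | X 0 ω = 1} = 2 / 3) (h2 : μ {ω | X 0 ω = -2} = 1 / 3) (n : ℕ) :
    μ (staysAbove X (-n)) = 0 := by
  have hmono : Monotone fun k : ℤ => μ.real (staysAbove X (-k)) := fun k l hkl =>
    measureReal_mono fun ω hω s => le_trans (by simpa using hkl) (hω s)
  have hrec : ∀ k : ℤ, k ≥ 0 → μ.real (staysAbove X (-k)) =
      2 / 3 * μ.real (staysAbove X (-(k + 1 : ℤ))) +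
        1 / 3 * μ.real (staysAbove X (-(k - 2 : ℤ))) := by
    intro k hk
    rw [measureReal_def, measure_staysAbove hmeas hindep hident h1 h2 (by simpa using hk),
      ENNReal.toReal_add (by finiteness) (by finiteness), ENNReal.toReal_mul,
      ENNReal.toReal_mul, measureReal_def, measureReal_def]
    push_cast
    norm_num [sub_eq_add_neg, add_comm]
  have hneg : ∀ k : ℤ, k < 0 → μ.real (staysAbove X (-k)) = 0 := fun k hk => by
    rw [show staysAbove X (-k) = ∅ from Set.eq_empty_of_forall_notMem fun ω hω => by
      have : (0 : ℝ) ≤ k := by simpa using hω 0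
      exact (Int.cast_nonneg_iff.1 this).not_gt hk]
    simp
  have := eq_zero_of_recurrence hmono ⟨1, by rintro _ ⟨k, rfl⟩; exact measureReal_le_one⟩
    hneg hrec n
  rwa [Int.cast_natCast, measureReal_eq_zero_iff] at this

lemma ae_frequently_pS_lt [IsProbabilityMeasure μ] (hmeas : ∀ i, Measurable (X i))
    (hindep : iIndepFun X μ) (hident : ∀ i, IdentDistrib (X i) (X 0) μ μ)
    (h1 : μ {ω | X 0 ω = 1} = 2 / 3) (h2 : μ {ω | X 0 ω = -2} = 1 / 3) (A : ℝ) :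
    ∀ᵐ ω ∂μ, ∃ᶠ s in atTop, pS X s ω < A := by
  refine ae_iff.2 <| measure_mono_null (t := ⋃ (a : ℕ) (n : ℕ),
    stepSeq (shiftSteps X a) ⁻¹' staysAbove coordSteps (-n)) ?_
    (measure_iUnion_null fun a => measure_iUnion_null fun n => ?_)
  · intro ω hω
    simp only [Set.mem_ofPred_eq, not_frequently, not_lt, eventually_atTop] at hω
    obtain ⟨a, ha⟩ := hω
    simp only [Set.mem_iUnion, preimage_stepSeq_staysAbove]
    refine ⟨a, ⌈pS X a ω - A⌉₊, fun s => ?_⟩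
    have := ha (a + s) (Nat.le_add_right a s)
    rw [pS_add] at this
    linarith [Nat.le_ceil (pS X a ω - A)]
  · rw [(identDistrib_stepSeq_shiftSteps hmeas hindep hident a).measure_mem_eq
      (measurableSet_staysAbove measurable_coordSteps _), preimage_stepSeq_staysAbove]
    exact measure_staysAbove_neg_eq_zero hmeas hindep hident h1 h2 n

end Recurrence

lemma integrableOn_pS_snd_cdTimes [IsFiniteMeasure μ] {α : ℤ} (hα : 0 < α)
    (hmeas : ∀ i, Measurable (X i)) (hsteps : ∀ᵐ ω ∂μ, ω ∈ stepsIn X)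
    (hfreq : ∀ᵐ ω ∂μ, ∃ᶠ s in atTop, pS X s ω < α) (i : ℕ) :
    IntegrableOn (fun ω => pS X (cdTimes X α (i + 1) ω).2 ω) (crossEv X α (i + 1)) μ := by
  refine Measure.integrableOn_of_bounded (M := |(α : ℝ)| + 2) (measure_ne_top μ _)
    (measurable_pS_comp hmeas (measurable_cdTimes hmeas _ (i + 1)).2).aestronglyMeasurable ?_
  filter_upwards [ae_restrict_mem (measurableSet_crossEv hmeas _ (i + 1)),
    ae_restrict_of_ae hsteps, ae_restrict_of_ae hfreq] with ω hmem hω hωf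
  obtain ⟨hlo, hhi⟩ := descentValue_mem_Icc (Y := shiftSteps X (cdTimes X α (i + 1) ω).1) α
    fun n => hω _
  rw [Real.norm_eq_abs, pS_snd_cdTimes_succ hα hω hωf hmem, abs_le]
  constructor <;> linarith [neg_abs_le (α : ℝ), le_abs_self (α : ℝ)]

/-- On `{t_{i+1}(α) = c}` the integrand is a function of the steps after `c`, while the event
itself agrees a.s. with one determined by the steps before `c`. -/
lemma setIntegral_pS_snd_cdTimes_of_fst_eq [IsProbabilityMeasure μ] {α : ℤ} (hα : 0 < α)
    (hmeas : ∀ i, Measurable (X i)) (hindep : iIndepFun X μ)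
    (hident : ∀ i, IdentDistrib (X i) (X 0) μ μ) (hsteps : ∀ᵐ ω ∂μ, ω ∈ stepsIn X)
    (hfreq : ∀ᵐ ω ∂μ, ∃ᶠ s in atTop, pS X s ω < α) (i c : ℕ) :
    ∫ ω in {ω | ω ∈ crossEv X α (i + 1) ∧ (cdTimes X α (i + 1) ω).1 = c},
        pS X (cdTimes X α (i + 1) ω).2 ω ∂μ =
      μ.real {ω | ω ∈ crossEv X α (i + 1) ∧ (cdTimes X α (i + 1) ω).1 = c} *
        ∫ ω, descentValue α X ω ∂μ := by
  set D := {ω | ω ∈ crossEv X α (i + 1) ∧ (cdTimes X α (i + 1) ω).1 = c}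
  set D' := {ω | ω ∈ crossEv (truncSteps X c) α (i + 1) ∧
    (cdTimes (truncSteps X c) α (i + 1) ω).1 = c}
  have hD' : MeasurableSet[stepsBefore X c] D' :=
    (measurableSet_crossEv (measurable_truncSteps c) _ (i + 1)).inter
      ((measurable_cdTimes (measurable_truncSteps c) _ (i + 1)).1 (measurableSet_singleton c))
  have hDD' : D =ᵐ[μ] D' := Filter.eventuallyEq_set.2 <| by
    filter_upwards [hfreq] with ω hω using mem_crossEv_fst_eq_iff_truncSteps hω (i + 1)
  have hDm : MeasurableSet D := (measurableSet_crossEv hmeas _ (i + 1)).inter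
    ((measurable_cdTimes hmeas _ (i + 1)).1 (measurableSet_singleton c))
  calc ∫ ω in D, pS X (cdTimes X α (i + 1) ω).2 ω ∂μ
      = ∫ ω in D', descentValue α (shiftSteps X c) ω ∂μ := by
        rw [← setIntegral_congr_set hDD']
        refine setIntegral_congr_ae hDm ?_
        filter_upwards [hsteps, hfreq] with ω hω hωf hmem
        rw [← hmem.2]
        exact pS_snd_cdTimes_succ hα hω hωf hmem.1
    _ = μ.real D' * ∫ ω, descentValue α X ω ∂μ := by
        simp only [← descentValue_stepSeq (Y := shiftSteps X c), ← descentValue_stepSeq (Y := X)]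
        exact setIntegral_comp_stepSeq_shiftSteps hmeas hindep hident hD'
          (measurable_descentValue measurable_coordSteps _)
    _ = μ.real D * ∫ ω, descentValue α X ω ∂μ := by
        rw [measureReal_congr hDD']

theorem setIntegral_pS_snd_cdTimes [IsProbabilityMeasure μ] {α : ℤ} (hα : 0 < α)
    (hmeas : ∀ i, Measurable (X i)) (hindep : iIndepFun X μ)
    (hident : ∀ i, IdentDistrib (X i) (X 0) μ μ) (hsteps : ∀ᵐ ω ∂μ, ω ∈ stepsIn X)
    (hfreq : ∀ᵐ ω ∂μ, ∃ᶠ s in atTop, pS X s ω < α) (i : ℕ) :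
    ∫ ω in crossEv X α (i + 1), pS X (cdTimes X α (i + 1) ω).2 ω ∂μ =
      μ.real (crossEv X α (i + 1)) * ∫ ω, descentValue α X ω ∂μ := by
  set D : ℕ → Set Ω := fun c => {ω | ω ∈ crossEv X α (i + 1) ∧ (cdTimes X α (i + 1) ω).1 = c}
  have hDm : ∀ c, MeasurableSet (D c) := fun c => (measurableSet_crossEv hmeas _ (i + 1)).inter
    ((measurable_cdTimes hmeas _ (i + 1)).1 (measurableSet_singleton c))
  have hU : crossEv X α (i + 1) = ⋃ c, D c := by
    ext ω
    simp [D]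
  have hdisj : Pairwise (Function.onFun Disjoint D) := fun c c' hcc' =>
    Set.disjoint_left.2 fun ω h h' => hcc' (h.2.symm.trans h'.2)
  rw [hU, integral_iUnion hDm hdisj (hU ▸ integrableOn_pS_snd_cdTimes hα hmeas hsteps hfreq i),
    tsum_congr (setIntegral_pS_snd_cdTimes_of_fst_eq hα hmeas hindep hident hsteps hfreq i),
    tsum_mul_right, measureReal_def, measure_iUnion hdisj hDm,
    ENNReal.tsum_toReal_eq fun c => measure_ne_top μ _]
  rfl

lemma cexp_pS_snd_cdTimes [IsProbabilityMeasure μ] {α : ℤ} (hα : 0 < α)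
    (hmeas : ∀ i, Measurable (X i)) (hindep : iIndepFun X μ)
    (hident : ∀ i, IdentDistrib (X i) (X 0) μ μ) (hsteps : ∀ᵐ ω ∂μ, ω ∈ stepsIn X)
    (hfreq : ∀ᵐ ω ∂μ, ∃ᶠ s in atTop, pS X s ω < α) {i : ℕ}
    (hpos : 0 < μ (crossEv X α (i + 1))) :
    cexp μ (crossEv X α (i + 1)) (fun ω => pS X (cdTimes X α (i + 1) ω).2 ω) =
      ∫ ω, descentValue α X ω ∂μ := by
  rw [cexp, setIntegral_pS_snd_cdTimes hα hmeas hindep hident hsteps hfreq, measureReal_def,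
    mul_div_cancel_left₀ _ (ENNReal.toReal_ne_zero.2 ⟨hpos.ne', measure_ne_top μ _⟩)]

lemma integral_descentValue_pos [IsProbabilityMeasure μ] {A : ℝ} (hA : 2 ≤ A)
    (hmeas : ∀ i, Measurable (X i)) (hindep : iIndepFun X μ)
    (hident : ∀ i, IdentDistrib (X i) (X 0) μ μ)
    (h1 : μ {ω | X 0 ω = 1} = 2 / 3) (h2 : μ {ω | X 0 ω = -2} = 1 / 3) :
    0 < ∫ ω, descentValue A X ω ∂μ := by
  set C := X 0 ⁻¹' {1} ∩ X 1 ⁻¹' {-2}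
  have hCm : MeasurableSet C :=
    (hmeas 0 (measurableSet_singleton _)).inter (hmeas 1 (measurableSet_singleton _))
  have hC : ∀ ω ∈ C, descentValue A X ω = A - 1 := by
    rintro ω ⟨hX0 : X 0 ω = 1, hX1 : X 1 ω = -2⟩
    have hS1 : pS X 1 ω = 1 := by simp [hX0]
    have hS2 : pS X 2 ω = -1 := by rw [pS_succ, hS1, hX1]; norm_num
    have hfirst : firstNegTime X ω = 2 := by
      refine IsLeast.csInf_eq ⟨⟨two_pos, by rw [hS2]; norm_num⟩, fun s ⟨hs, hneg⟩ => ?_⟩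
      by_contra! h
      interval_cases s
      rw [hS1] at hneg
      norm_num at hneg
    rw [descentValue, hfirst, hS2]
    ring
  have hμC : μ C = 2 / 3 * (1 / 3) := by
    rw [(hindep.indepFun zero_ne_one).measure_inter_preimage_eq_mul _ _
      (measurableSet_singleton _) (measurableSet_singleton _),
      (hident 1).measure_mem_eq (measurableSet_singleton _)]
    exact congrArg₂ _ h1 h2
  have hbound : ∀ᵐ ω ∂μ, descentValue A X ω ∈ Set.Icc (A - 2) A := by
    filter_upwards [ae_stepsIn hmeas hident h1 h2] with ω hω using descentValue_mem_Icc A hω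
  have hint : Integrable (descentValue A X) μ := by
    refine Integrable.of_bound (measurable_descentValue hmeas A).aestronglyMeasurable A ?_
    filter_upwards [hbound] with ω hω
    rw [Real.norm_eq_abs, abs_le]
    constructor <;> linarith [hω.1, hω.2]
  have hnn : 0 ≤ᵐ[μ] descentValue A X := by
    filter_upwards [hbound] with ω hω
    exact le_trans (by linarith : (0 : ℝ) ≤ A - 2) hω.1
  calc 0 < (A - 1) * μ.real C := by
        refine mul_pos (by linarith) ?_
        rw [measureReal_def, hμC]
        norm_num [ENNReal.toReal_div]
    _ = ∫ ω in C, descentValue A X ω ∂μ := by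
        rw [setIntegral_congr_fun hCm hC, setIntegral_const, smul_eq_mul, mul_comm]
    _ ≤ ∫ ω, descentValue A X ω ∂μ := setIntegral_le_integral hint hnn

lemma measure_crossEv_one_pos {α : ℤ} (hα : 0 < α) (hindep : iIndepFun X μ)
    (hident : ∀ i, IdentDistrib (X i) (X 0) μ μ) (h1 : μ {ω | X 0 ω = 1} = 2 / 3) :
    0 < μ (crossEv X α 1) := by
  lift α to ℕ using hα.le
  have hC : μ (⋂ i ∈ Finset.range α, X i ⁻¹' {1}) = (2 / 3) ^ α := by
    rw [hindep.measure_inter_preimage_eq_mul (Finset.range α) (sets := fun _ => {1})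
      (fun _ _ => measurableSet_singleton 1),
      Finset.prod_congr rfl fun i _ => (hident i).measure_mem_eq (measurableSet_singleton 1)]
    simp only [Finset.prod_const, Finset.card_range]
    exact congrArg (· ^ α) h1
  refine (hC ▸ ENNReal.pow_pos (by norm_num) α).trans_le (measure_mono fun ω hω => ?_)
  simp only [Set.mem_iInter, Finset.mem_range, Set.mem_preimage, Set.mem_singleton_iff] at hω
  have hpS : ∀ t ≤ α, pS X t ω = t := by
    intro t ht
    induction t with
    | zero => simp
    | succ t ih => rw [pS_succ, ih (by omega), hω t (by omega)]; push_cast; ring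
  refine ⟨trivial, α, by exact_mod_cast hα,
    (le_tauRW_iff α).2 (Or.inr ⟨?_, fun s hs1 hs => ?_⟩), ?_⟩
  · rw [hω 0 (by exact_mod_cast hα)]; norm_num
  · rw [hpS s hs.le]; positivity
  · rw [hpS α le_rfl, Int.cast_natCast]

end LevelCrossing

open LevelCrossing

/-- For the random walk whose step takes the value `1` with probability
`2/3` and the value `-2` with probability `1/3`, for every integer level `α ≥ 2`:
conditionally on `𝔄_i(α)` one has `S_{t_i(α) - 1} = α - 1` almost surely; moreover
`E[S_{τ₁(α)} ∣ 𝔄₁(α)] > 0` and, when `P(𝔄₂(α)) > 0`,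
`E[S_{τ₂(α)} ∣ 𝔄₂(α)] = E[S_{τ₁(α)} ∣ 𝔄₁(α)]`. -/
theorem stmt16 (μ : Measure Ω) [IsProbabilityMeasure μ]
    (X : ℕ → Ω → ℝ) (hmeas : ∀ i, Measurable (X i))
    (hindep : iIndepFun X μ)
    (hident : ∀ i, IdentDistrib (X i) (X 0) μ μ)
    (h1 : μ {ω | X 0 ω = 1} = 2 / 3) (h2 : μ {ω | X 0 ω = -2} = 1 / 3) :
    ∀ α : ℤ, 2 ≤ α →
      (∀ i : ℕ, 1 ≤ i → 0 < μ (crossEv X (α : ℝ) i) →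
        ∀ᵐ ω ∂μ, ω ∈ crossEv X (α : ℝ) i →
          pS X ((cdTimes X (α : ℝ) i ω).1 - 1) ω = (α : ℝ) - 1) ∧
      0 < cexp μ (crossEv X (α : ℝ) 1) (fun ω => pS X ((cdTimes X (α : ℝ) 1 ω).2) ω) ∧
      (0 < μ (crossEv X (α : ℝ) 2) →
        cexp μ (crossEv X (α : ℝ) 2) (fun ω => pS X ((cdTimes X (α : ℝ) 2 ω).2) ω) =
          cexp μ (crossEv X (α : ℝ) 1) (fun ω => pS X ((cdTimes X (α : ℝ) 1 ω).2) ω)) := by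
  intro α hα
  have hα0 : 0 < α := by omega
  have hsteps := ae_stepsIn hmeas hident h1 h2
  have hcexp := fun i => cexp_pS_snd_cdTimes (i := i) hα0 hmeas hindep hident hsteps
    (ae_frequently_pS_lt hmeas hindep hident h1 h2 α)
  have hpos1 := measure_crossEv_one_pos hα0 hindep hident h1
  refine ⟨fun i hi _ => ?_, ?_, fun hpos2 => ?_⟩
  · obtain ⟨i, rfl⟩ := Nat.exists_eq_add_of_le' hi
    filter_upwards [hsteps] with ω hω hmem using (pS_fst_cdTimes hα0 hω hmem).1
  · rw [hcexp 0 hpos1]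
    exact integral_descentValue_pos (by exact_mod_cast hα) hmeas hindep hident h1 h2
  · rw [hcexp 1 hpos2, hcexp 0 hpos1]
end
end
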